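/- Let H : E → ℝ be smooth and let ζ₁, …, ζ_m be smooth vector fields on E with L_{ζᵢ} α_H = 0 for i = 1, …, m; set Jᵢ(x) = α_H(x)(ζᵢ(x)). Fix x ∈ E. If the vectors Z_H(x), ζ₁(x), …, ζ_m(x) are linearly independent in E, then the differentials dJ₁(x), …, dJ_m(x) are linearly independent in the dual of E. -/

import Mathlib

noncomputable section
open scoped ContDiff

/-- The extended phase space `E = ℝ × ℝⁿ × ℝⁿ`, with points `x = (t, q, p)`. -/
abbrev EE (n : ℕ) : Type := ℝ × (Fin n → ℝ) × (Fin n → ℝ)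

/-- The Poincaré–Cartan 1-form `α_H = p dq − H dt`:
`α_H(x)(τ̂, ξ̂, η̂) = ∑ i, pᵢ ξ̂ᵢ − H(x) τ̂`. -/
def pcForm {n : ℕ} (H : EE n → ℝ) (x : EE n) : EE n →L[ℝ] ℝ :=
  (∑ i, x.2.2 i • ((ContinuousLinearMap.proj i).comp
      ((ContinuousLinearMap.fst ℝ (Fin n → ℝ) (Fin n → ℝ)).comp
        (ContinuousLinearMap.snd ℝ ℝ ((Fin n → ℝ) × (Fin n → ℝ))))))
    - H x • ContinuousLinearMap.fst ℝ ℝ ((Fin n → ℝ) × (Fin n → ℝ))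

/-- The vector field `Z_H(x) = (1, ∂H/∂p(x), −∂H/∂q(x))` of Hamilton's equations. -/
def ZH {n : ℕ} (H : EE n → ℝ) (x : EE n) : EE n :=
  (1, fun i => fderiv ℝ H x (0, 0, Pi.single i 1),
      fun i => - fderiv ℝ H x (0, Pi.single i 1, 0))

/-- The Lie derivative of a 1-form `α` along a vector field `ζ`:
`(L_ζ α)(x)(v) = (Dα(x)(ζ(x)))(v) + α(x)(Dζ(x)(v))`. -/
def lieDeriv {n : ℕ} (ζ : EE n → EE n) (α : EE n → (EE n →L[ℝ] ℝ)) (x : EE n) :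
    EE n →L[ℝ] ℝ :=
  fderiv ℝ α x (ζ x) + (α x).comp (fderiv ℝ ζ x)

/-- The exterior derivative of a 1-form:
`dα(x)(u,v) = (Dα(x)u)(v) − (Dα(x)v)(u)`. -/
def extDeriv1Form {n : ℕ} (α : EE n → (EE n →L[ℝ] ℝ)) (x u v : EE n) : ℝ :=
  fderiv ℝ α x u v - fderiv ℝ α x v u

/-!
By Cartan's formula, the symmetry condition `L_{ζᵢ} α_H = 0` says `dJᵢ = dα_H(·, ζᵢ)`. A relation
`∑ gᵢ dJᵢ(x) = 0` therefore puts `∑ gᵢ ζᵢ(x)` in the kernel of `dα_H(x) = dp ∧ dq − dH ∧ dt`, and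
that kernel is the line spanned by `Z_H(x)`. Independence of `Z_H(x), ζ₁(x), …, ζ_m(x)` then
forces `g = 0`.
-/

theorem LinearIndependent.eq_zero_of_sum_smul_eq_smul_finCons {R V : Type*} [Ring R]
    [AddCommGroup V] [Module R V] {m : ℕ} {z : V} {f : Fin m → V}
    (h : LinearIndependent R (Fin.cons z f : Fin (m + 1) → V)) {g : Fin m → R} {c : R}
    (hg : ∑ i, g i • f i = c • z) : g = 0 := by
  funext i
  have := Fintype.linearIndependent_iff.1 h (Fin.cons (-c) g)
    (by simp [Fin.sum_univ_succ, hg]) i.succ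
  simpa using this

variable {n : ℕ}

theorem extDeriv1Form_sum_smul {ι : Type*} (s : Finset ι) (α : EE n → (EE n →L[ℝ] ℝ))
    (x v : EE n) (g : ι → ℝ) (w : ι → EE n) :
    extDeriv1Form α x v (∑ i ∈ s, g i • w i) = ∑ i ∈ s, g i * extDeriv1Form α x v (w i) := by
  simp [extDeriv1Form, mul_sub, Finset.sum_sub_distrib]

/-- Cartan's formula `L_ζ α = ι_ζ dα + d(ι_ζ α)` at a point where `L_ζ α` vanishes. -/
theorem fderiv_apply_eq_extDeriv1Form_of_lieDeriv_eq_zero {ζ : EE n → EE n}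
    {α : EE n → (EE n →L[ℝ] ℝ)} {x : EE n} (hα : DifferentiableAt ℝ α x)
    (hζ : DifferentiableAt ℝ ζ x) (hL : lieDeriv ζ α x = 0) (v : EE n) :
    fderiv ℝ (fun y => α y (ζ y)) x v = extDeriv1Form α x v (ζ x) := by
  have hL' : (α x).comp (fderiv ℝ ζ x) v = -fderiv ℝ α x (ζ x) v := by
    rw [← neg_apply, ← eq_neg_of_add_eq_zero_right hL]
  rw [fderiv_clm_apply hα hζ, add_apply, hL', extDeriv1Form]
  simp only [ContinuousLinearMap.flip_apply]
  ring

def dt : EE n →L[ℝ] ℝ := ContinuousLinearMap.fst ℝ ℝ ((Fin n → ℝ) × (Fin n → ℝ))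

/-- `dpdq u v = ∑ i, u.pᵢ v.qᵢ`, the derivative of the 1-form `p dq`. -/
def dpdq : EE n →L[ℝ] EE n →L[ℝ] ℝ :=
  ∑ i, ((ContinuousLinearMap.proj i).comp ((ContinuousLinearMap.snd ℝ _ _).comp
      (ContinuousLinearMap.snd ℝ _ _))).smulRight
    ((ContinuousLinearMap.proj i).comp ((ContinuousLinearMap.fst ℝ _ _).comp
      (ContinuousLinearMap.snd ℝ ℝ _)))

theorem pcForm_eq_dpdq_sub (H : EE n → ℝ) : pcForm H = fun y => dpdq y - H y • dt := by
  funext y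
  ext v <;> simp [pcForm, dpdq, dt]

theorem hasFDerivAt_pcForm {H : EE n → ℝ} {x : EE n} (hH : DifferentiableAt ℝ H x) :
    HasFDerivAt (pcForm H) (dpdq - (fderiv ℝ H x).smulRight dt) x := by
  rw [pcForm_eq_dpdq_sub]
  have hHfst := hH.hasFDerivAt.smul (hasFDerivAt_const (dt (n := n)) x)
  rw [smul_zero, zero_add] at hHfst
  exact dpdq.hasFDerivAt.sub hHfst

theorem extDeriv1Form_pcForm {H : EE n → ℝ} {x : EE n} (hH : DifferentiableAt ℝ H x)
    (u v : EE n) :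
    extDeriv1Form (pcForm H) x u v =
      (∑ i, u.2.2 i * v.2.1 i - fderiv ℝ H x u * v.1) -
        (∑ i, v.2.2 i * u.2.1 i - fderiv ℝ H x v * u.1) := by
  simp [extDeriv1Form, (hasFDerivAt_pcForm hH).fderiv, dpdq, dt]

theorem eq_smul_ZH_of_extDeriv1Form_pcForm_eq_zero {H : EE n → ℝ} {x w : EE n}
    (hH : DifferentiableAt ℝ H x) (hw : ∀ v, extDeriv1Form (pcForm H) x v w = 0) :
    w = w.1 • ZH H x := by
  have hq : ∀ j, w.2.1 j = w.1 * fderiv ℝ H x (0, 0, Pi.single j 1) := by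
    intro j
    have h := hw (0, 0, Pi.single j 1)
    simp [extDeriv1Form_pcForm hH, Pi.single_apply] at h
    linear_combination h
  have hp : ∀ j, w.2.2 j = -(w.1 * fderiv ℝ H x (0, Pi.single j 1, 0)) := by
    intro j
    have h := hw (0, Pi.single j 1, 0)
    simp [extDeriv1Form_pcForm hH, Pi.single_apply] at h
    linear_combination -h
  ext j <;> simp [ZH, hq, hp]

theorem differentials_of_noether_integrals_independent {n m : ℕ}
    (H : EE n → ℝ) (hH : ContDiff ℝ ∞ H)
    (ζ : Fin m → (EE n → EE n)) (hζ : ∀ i, ContDiff ℝ ∞ (ζ i))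
    (hsym : ∀ i, ∀ x, lieDeriv (ζ i) (pcForm H) x = 0)
    (x : EE n)
    (hindep : LinearIndependent ℝ (Fin.cons (ZH H x) (fun i => ζ i x) :
      Fin (m + 1) → EE n)) :
    LinearIndependent ℝ (fun i : Fin m => fderiv ℝ (fun y => pcForm H y (ζ i y)) x) := by
  have hHx : DifferentiableAt ℝ H x := hH.differentiable (by simp) x
  have hdJ : ∀ i v, fderiv ℝ (fun y => pcForm H y (ζ i y)) x v =
      extDeriv1Form (pcForm H) x v (ζ i x) := fun i =>
    fderiv_apply_eq_extDeriv1Form_of_lieDeriv_eq_zero (hasFDerivAt_pcForm hHx).differentiableAt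
      ((hζ i).differentiable (by simp) x) (hsym i x)
  rw [Fintype.linearIndependent_iff]
  intro g hg
  have hker : ∀ v, extDeriv1Form (pcForm H) x v (∑ i, g i • ζ i x) = 0 := fun v => by
    simpa [extDeriv1Form_sum_smul, hdJ] using congrArg (· v) hg
  exact congrFun (hindep.eq_zero_of_sum_smul_eq_smul_finCons
    (eq_smul_ZH_of_extDeriv1Form_pcForm_eq_zero hHx hker))
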